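/- Let K be a field, n ≥ 2, q ∈ K a primitive n-th root of unity, and A_1(q) the quantum Weyl algebra. Let h := y·x + (q−1)^{-1} ∈ A_1(q). Then the quotient of A_1(q) by the two-sided ideal generated by h is isomorphic as a K-algebra to the Laurent polynomial ring K[X, X^{-1}], via an isomorphism sending the image of x to X. -/

import Mathlib

/-- The defining relation of the quantum Weyl algebra `A_1(q)`: it is generated over `K` by
`x` (the generator `ι K 0`) and `y` (the generator `ι K 1`) subject to `x·y = q·y·x + 1`. -/
inductive QWRel (K : Type) [Field K] (q : K) :
    FreeAlgebra K (Fin 2) → FreeAlgebra K (Fin 2) → Prop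
  | rel : QWRel K q (FreeAlgebra.ι K (0 : Fin 2) * FreeAlgebra.ι K (1 : Fin 2))
      (algebraMap K (FreeAlgebra K (Fin 2)) q *
        (FreeAlgebra.ι K (1 : Fin 2) * FreeAlgebra.ι K (0 : Fin 2)) + 1)

/-- The quantum Weyl algebra `A_1(q)`: the quotient of the free `K`-algebra `K⟨x,y⟩` by the
two-sided ideal generated by `x·y − q·y·x − 1`. -/
abbrev QW (K : Type) [Field K] (q : K) : Type := RingQuot (QWRel K q)

/-- The image of the generator `x` in `A_1(q)`. -/
noncomputable def QWx (K : Type) [Field K] (q : K) : QW K q :=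
  RingQuot.mkAlgHom K (QWRel K q) (FreeAlgebra.ι K (0 : Fin 2))

/-- The image of the generator `y` in `A_1(q)`. -/
noncomputable def QWy (K : Type) [Field K] (q : K) : QW K q :=
  RingQuot.mkAlgHom K (QWRel K q) (FreeAlgebra.ι K (1 : Fin 2))

/-!
Sending `x ↦ T` and `y ↦ (1 - q)⁻¹ T⁻¹` respects `x·y = q·y·x + 1` and kills `h`, and it is
onto since `T` and `T⁻¹` are the images of `x` and `(1 - q)·y`. Conversely, modulo `h` we have
`y·x = x·y = (1 - q)⁻¹`, so `x` becomes a unit of `A_1(q)/(h)` with inverse `(1 - q)·y`;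
`T ↦ x` then gives a map `K[T;T⁻¹] → A_1(q)/(h)` whose composite with the first map is the
quotient map, hence the kernel is exactly `(h)`.
-/

open LaurentPolynomial

section FieldIdentities

variable {K : Type*} [Field K]

theorem mul_inv_one_sub_add_one {q : K} (hq : q ≠ 1) : q * (1 - q)⁻¹ + 1 = (1 - q)⁻¹ := by
  have : 1 - q ≠ 0 := sub_ne_zero.mpr hq.symm
  field_simp
  ring

theorem inv_one_sub_add_inv_sub_one (q : K) : (1 - q)⁻¹ + (q - 1)⁻¹ = 0 := by
  rw [← neg_sub q 1, inv_neg, neg_add_cancel]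

end FieldIdentities

namespace LaurentPolynomial

variable {R A : Type*} [CommSemiring R] [Semiring A] [Algebra R A]

theorem T_neg_one_mul_T_one : (T (-1) * T 1 : R[T;T⁻¹]) = 1 := by
  rw [← T_add, neg_add_cancel, T_zero]

/-- Unlike `LaurentPolynomial.eval₂`, this does not need a commutative target. -/
noncomputable def liftUnit (u : Aˣ) : R[T;T⁻¹] →ₐ[R] A :=
  AddMonoidAlgebra.lift R A ℤ ((Units.coeHom A).comp (zpowersHom Aˣ u))

theorem liftUnit_T (u : Aˣ) (m : ℤ) : liftUnit (R := R) u (T m) = ↑(u ^ m) := by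
  rw [liftUnit, T, AddMonoidAlgebra.lift_single, one_smul]
  rfl

theorem liftUnit_C_mul_T (u : Aˣ) (r : R) (m : ℤ) :
    liftUnit u (C r * T m) = algebraMap R A r * ↑(u ^ m) := by
  rw [map_mul, liftUnit_T, C_eq_algebraMap, AlgHom.commutes]

theorem subalgebra_eq_top_of_T_mem {S : Subalgebra R R[T;T⁻¹]} (hpos : T 1 ∈ S)
    (hneg : T (-1) ∈ S) : S = ⊤ := by
  have hT : ∀ m : ℤ, T m ∈ S := by
    intro m
    induction m using Int.induction_on with
    | zero => exact T_zero (R := R) ▸ S.one_mem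
    | succ m ih => exact T_add (R := R) _ 1 ▸ S.mul_mem ih hpos
    | pred m ih => exact T_sub (R := R) _ 1 ▸ S.mul_mem ih hneg
  refine eq_top_iff.mpr fun p _ => ?_
  induction p using LaurentPolynomial.induction_on' with
  | add p p' hp hp' => exact S.add_mem (hp trivial) (hp' trivial)
  | C_mul_T m r =>
    rw [C_eq_algebraMap]
    exact S.mul_mem (S.algebraMap_mem r) (hT m)

end LaurentPolynomial

namespace QW

variable {K : Type} [Field K] {q : K}

theorem QWx_mul_QWy :
    QWx K q * QWy K q = algebraMap K (QW K q) q * (QWy K q * QWx K q) + 1 := by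
  have h := RingQuot.mkAlgHom_rel K (QWRel.rel (K := K) (q := q))
  rw [map_mul, map_add, map_mul, map_mul, map_one, AlgHom.commutes] at h
  exact h

theorem algHom_ext {B : Type*} [Semiring B] [Algebra K B] {f g : QW K q →ₐ[K] B}
    (hx : f (QWx K q) = g (QWx K q)) (hy : f (QWy K q) = g (QWy K q)) : f = g := by
  refine RingQuot.ringQuot_ext' K f g (FreeAlgebra.hom_ext (funext fun i => ?_))
  fin_cases i
  exacts [hx, hy]

section lift

variable {B : Type*} [Semiring B] [Algebra K B] (a b : B)
  (hab : a * b = algebraMap K B q * (b * a) + 1)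

noncomputable def lift : QW K q →ₐ[K] B :=
  RingQuot.liftAlgHom K ⟨FreeAlgebra.lift K ![a, b], by
    rintro _ _ ⟨⟩
    simpa using hab⟩

theorem lift_QWx : lift a b hab (QWx K q) = a := by
  simp [lift, QWx]

theorem lift_QWy : lift a b hab (QWy K q) = b := by
  simp [lift, QWy]

end lift

noncomputable def h (K : Type) [Field K] (q : K) : QW K q :=
  QWy K q * QWx K q + algebraMap K (QW K q) (q - 1)⁻¹

abbrev QuotH (K : Type) [Field K] (q : K) : Type :=
  (TwoSidedIdeal.span {h K q}).ringCon.Quotient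

noncomputable abbrev mkQuotH (K : Type) [Field K] (q : K) : QW K q →ₐ[K] QuotH K q :=
  RingCon.mkₐ K (TwoSidedIdeal.span {h K q}).ringCon

theorem mkQuotH_eq_zero_iff {r : QW K q} :
    mkQuotH K q r = 0 ↔ r ∈ TwoSidedIdeal.span {h K q} := by
  rw [TwoSidedIdeal.mem_iff, ← RingCon.eq]
  rfl

theorem mkQuotH_QWy_mul_QWx :
    mkQuotH K q (QWy K q * QWx K q) = algebraMap K (QuotH K q) (1 - q)⁻¹ := by
  have h0 : mkQuotH K q (QWy K q * QWx K q + algebraMap K (QW K q) (q - 1)⁻¹) = 0 :=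
    mkQuotH_eq_zero_iff.mpr (TwoSidedIdeal.subset_span rfl)
  rw [map_add, AlgHom.commutes] at h0
  rw [eq_neg_of_add_eq_zero_left h0, eq_neg_of_add_eq_zero_left (inv_one_sub_add_inv_sub_one q),
    map_neg]

theorem mkQuotH_QWx_mul_QWy (hq : q ≠ 1) :
    mkQuotH K q (QWx K q * QWy K q) = algebraMap K (QuotH K q) (1 - q)⁻¹ := by
  rw [QWx_mul_QWy, map_add, map_mul, mkQuotH_QWy_mul_QWx, AlgHom.commutes, map_one, ← map_mul,
    ← map_one (algebraMap K (QuotH K q)), ← map_add, mul_inv_one_sub_add_one hq]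

noncomputable def unitQWx (hq : q ≠ 1) : (QuotH K q)ˣ where
  val := mkQuotH K q (QWx K q)
  inv := algebraMap K (QuotH K q) (1 - q) * mkQuotH K q (QWy K q)
  val_inv := by
    rw [← mul_assoc, ← Algebra.commutes, mul_assoc, ← map_mul, mkQuotH_QWx_mul_QWy hq, ← map_mul,
      mul_inv_cancel₀ (sub_ne_zero.mpr hq.symm), map_one]
  inv_val := by
    rw [mul_assoc, ← map_mul, mkQuotH_QWy_mul_QWx, ← map_mul,
      mul_inv_cancel₀ (sub_ne_zero.mpr hq.symm), map_one]

/-- The image of `y` is forced: `h ↦ 0` means `y·x ↦ -(q - 1)⁻¹ = (1 - q)⁻¹`. -/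
noncomputable def toLaurent (hq : q ≠ 1) : QW K q →ₐ[K] K[T;T⁻¹] :=
  lift (T 1) (C (1 - q)⁻¹ * T (-1)) <| by
    have hC : C q * C (1 - q)⁻¹ + 1 = C (1 - q)⁻¹ := by
      rw [← map_mul, ← map_one C, ← map_add, mul_inv_one_sub_add_one hq]
    rw [← C_eq_algebraMap]
    linear_combination (1 - C q) * C (1 - q)⁻¹ * T_neg_one_mul_T_one (R := K) - hC

variable (hq : q ≠ 1)

theorem toLaurent_QWx : toLaurent hq (QWx K q) = T 1 := lift_QWx ..

theorem toLaurent_QWy : toLaurent hq (QWy K q) = C (1 - q)⁻¹ * T (-1) := lift_QWy ..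

theorem toLaurent_h : toLaurent hq (h K q) = 0 := by
  rw [h, map_add, map_mul, toLaurent_QWx, toLaurent_QWy, AlgHom.commutes, ← C_eq_algebraMap,
    mul_assoc, T_neg_one_mul_T_one, mul_one, ← map_add, inv_one_sub_add_inv_sub_one, map_zero]

theorem toLaurent_surjective : Function.Surjective (toLaurent hq) := by
  refine (AlgHom.range_eq_top _).mp (subalgebra_eq_top_of_T_mem ⟨QWx K q, toLaurent_QWx hq⟩
    ⟨algebraMap K (QW K q) (1 - q) * QWy K q, ?_⟩)
  change toLaurent hq _ = _
  rw [map_mul, toLaurent_QWy, AlgHom.commutes, ← C_eq_algebraMap, ← mul_assoc, ← map_mul,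
    mul_inv_cancel₀ (sub_ne_zero.mpr hq.symm), map_one, one_mul]

theorem liftUnit_comp_toLaurent :
    (liftUnit (unitQWx hq)).comp (toLaurent hq) = mkQuotH K q := by
  refine algHom_ext ?_ ?_
  · rw [AlgHom.comp_apply, toLaurent_QWx, liftUnit_T, zpow_one]
    rfl
  · rw [AlgHom.comp_apply, toLaurent_QWy, liftUnit_C_mul_T, zpow_neg_one]
    change algebraMap K (QuotH K q) (1 - q)⁻¹ *
      (algebraMap K (QuotH K q) (1 - q) * mkQuotH K q (QWy K q)) = _
    rw [← mul_assoc, ← map_mul, inv_mul_cancel₀ (sub_ne_zero.mpr hq.symm), map_one, one_mul]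

theorem ker_toLaurent : TwoSidedIdeal.ker (toLaurent hq) = TwoSidedIdeal.span {h K q} := by
  refine le_antisymm (fun r hr => ?_) ?_
  · rw [← mkQuotH_eq_zero_iff, ← liftUnit_comp_toLaurent hq, AlgHom.comp_apply,
      (TwoSidedIdeal.mem_ker _).mp hr, map_zero]
  · exact TwoSidedIdeal.span_le.mpr <| Set.singleton_subset_iff.mpr <|
      (TwoSidedIdeal.mem_ker _).mpr (toLaurent_h hq)

end QW

/-- Let `K` be a field, `n ≥ 2`, `q ∈ K` a primitive `n`-th root of unity,
and `A_1(q)` the quantum Weyl algebra. Let `h := y·x + (q−1)⁻¹`. Then the quotient of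
`A_1(q)` by the two-sided ideal generated by `h` is `K`-algebra isomorphic to the Laurent
polynomial ring `K[X, X⁻¹]`, via an isomorphism sending the image of `x` to `X` (expressed via
a surjective `K`-algebra homomorphism `A_1(q) → K[X, X⁻¹]` sending `x ↦ X` whose kernel is
the two-sided ideal generated by `h`). -/
theorem stmt_14 (K : Type) [Field K] (n : ℕ) (hn : 2 ≤ n) (q : K)
    (hq : IsPrimitiveRoot q n) :
    ∃ f : QW K q →ₐ[K] LaurentPolynomial K,
      Function.Surjective f ∧
      f (QWx K q) = LaurentPolynomial.T 1 ∧
      ∀ r : QW K q, f r = 0 ↔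
        r ∈ (TwoSidedIdeal.span
          {QWy K q * QWx K q + algebraMap K (QW K q) (q - 1)⁻¹} :
            TwoSidedIdeal (QW K q)) := by
  have hq1 : q ≠ 1 := hq.ne_one (by omega)
  refine ⟨QW.toLaurent hq1, QW.toLaurent_surjective hq1, QW.toLaurent_QWx hq1, fun r => ?_⟩
  rw [← TwoSidedIdeal.mem_ker, QW.ker_toLaurent hq1]
  rfl
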